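/- Correctness of normalization for RLC: for every term Γ ⊢ t : A of RLC there exists a normal form n with Γ ⊢nf n : A such that Γ ⊢ t ≡ n : A in the equational theory of RLC (viewing the normal form as a term via the evident embedding). -/

import Mathlib

/-- Types of RLC: base, unit, products, functions and the modal type ◇. -/
inductive Ty : Type
  | base : Ty
  | unit : Ty
  | prod : Ty → Ty → Ty
  | arr : Ty → Ty → Ty
  | dia : Ty → Ty

/-- Typing contexts (de Bruijn; the head is the most recently bound variable). -/
abbrev Ctx := List Ty

/-- Raw terms of RLC with de Bruijn indices. -/
inductive Tm : Type
  | var : ℕ → Tm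
  | unit : Tm
  | pair : Tm → Tm → Tm
  | fst : Tm → Tm
  | snd : Tm → Tm
  | lam : Tm → Tm
  | app : Tm → Tm → Tm
  | ret : Tm → Tm                 -- return t
  | lett : Tm → Tm → Tm           -- let x = t in u (letmap)

/-- Lifting of a renaming under a binder. -/
def liftRen (ρ : ℕ → ℕ) : ℕ → ℕ
  | 0 => 0
  | n + 1 => ρ n + 1

/-- Renaming of the variables of a term. -/
def rename (ρ : ℕ → ℕ) : Tm → Tm
  | .var n => .var (ρ n)
  | .unit => .unit
  | .pair t u => .pair (rename ρ t) (rename ρ u)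
  | .fst t => .fst (rename ρ t)
  | .snd t => .snd (rename ρ t)
  | .lam t => .lam (rename (liftRen ρ) t)
  | .app t u => .app (rename ρ t) (rename ρ u)
  | .ret t => .ret (rename ρ t)
  | .lett t u => .lett (rename ρ t) (rename (liftRen ρ) u)

/-- Capture-avoiding substitution of `u` for the variable `k`. -/
def subst (k : ℕ) (u : Tm) : Tm → Tm
  | .var n => if n < k then .var n else if n = k then rename (· + k) u else .var (n - 1)
  | .unit => .unit
  | .pair t t' => .pair (subst k u t) (subst k u t')
  | .fst t => .fst (subst k u t)
  | .snd t => .snd (subst k u t)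
  | .lam t => .lam (subst (k + 1) u t)
  | .app t t' => .app (subst k u t) (subst k u t')
  | .ret t => .ret (subst k u t)
  | .lett t t' => .lett (subst k u t) (subst (k + 1) u t')

/-- The typing judgment `Γ ⊢ t : A` of RLC, with the return and letmap rules. -/
inductive HasTy : Ctx → Tm → Ty → Prop
  | var {Γ n A} : Γ[n]? = some A → HasTy Γ (.var n) A
  | unit {Γ} : HasTy Γ .unit .unit
  | pair {Γ t u A B} : HasTy Γ t A → HasTy Γ u B → HasTy Γ (.pair t u) (.prod A B)
  | fst {Γ t A B} : HasTy Γ t (.prod A B) → HasTy Γ (.fst t) A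
  | snd {Γ t A B} : HasTy Γ t (.prod A B) → HasTy Γ (.snd t) B
  | lam {Γ t A B} : HasTy (A :: Γ) t B → HasTy Γ (.lam t) (.arr A B)
  | app {Γ t u A B} : HasTy Γ t (.arr A B) → HasTy Γ u A → HasTy Γ (.app t u) B
  | ret {Γ t A} : HasTy Γ t A → HasTy Γ (.ret t) (.dia A)
  | lett {Γ t u A B} : HasTy Γ t (.dia A) → HasTy (A :: Γ) u B →
      HasTy Γ (.lett t u) (.dia B)

/-- The equational theory `Γ ⊢ t ≡ u : A` of RLC: the congruence generated by
⊤-η, ×-β, ×-η, →-β, →-η, ◇-η, ◇-β₁ and ◇-β₂. -/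
inductive EqTm : Ctx → Tm → Tm → Ty → Prop
  | refl {Γ t A} : HasTy Γ t A → EqTm Γ t t A
  | symm {Γ t u A} : EqTm Γ t u A → EqTm Γ u t A
  | trans {Γ t u v A} : EqTm Γ t u A → EqTm Γ u v A → EqTm Γ t v A
  | pair_congr {Γ t t' u u' A B} : EqTm Γ t t' A → EqTm Γ u u' B →
      EqTm Γ (.pair t u) (.pair t' u') (.prod A B)
  | fst_congr {Γ t t' A B} : EqTm Γ t t' (.prod A B) → EqTm Γ (.fst t) (.fst t') A
  | snd_congr {Γ t t' A B} : EqTm Γ t t' (.prod A B) → EqTm Γ (.snd t) (.snd t') B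
  | lam_congr {Γ t t' A B} : EqTm (A :: Γ) t t' B → EqTm Γ (.lam t) (.lam t') (.arr A B)
  | app_congr {Γ t t' u u' A B} : EqTm Γ t t' (.arr A B) → EqTm Γ u u' A →
      EqTm Γ (.app t u) (.app t' u') B
  | ret_congr {Γ t t' A} : EqTm Γ t t' A → EqTm Γ (.ret t) (.ret t') (.dia A)
  | lett_congr {Γ t t' u u' A B} : EqTm Γ t t' (.dia A) → EqTm (A :: Γ) u u' B →
      EqTm Γ (.lett t u) (.lett t' u') (.dia B)
  | unit_eta {Γ t} : HasTy Γ t .unit → EqTm Γ t .unit .unit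
  | prod_beta1 {Γ t u A B} : HasTy Γ t A → HasTy Γ u B →
      EqTm Γ (.fst (.pair t u)) t A
  | prod_beta2 {Γ t u A B} : HasTy Γ t A → HasTy Γ u B →
      EqTm Γ (.snd (.pair t u)) u B
  | prod_eta {Γ t A B} : HasTy Γ t (.prod A B) →
      EqTm Γ t (.pair (.fst t) (.snd t)) (.prod A B)
  | arr_beta {Γ t u A B} : HasTy (A :: Γ) t B → HasTy Γ u A →
      EqTm Γ (.app (.lam t) u) (subst 0 u t) B
  | arr_eta {Γ t A B} : HasTy Γ t (.arr A B) →
      EqTm Γ t (.lam (.app (rename Nat.succ t) (.var 0))) (.arr A B)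
  | dia_eta {Γ t A} : HasTy Γ t (.dia A) →
      EqTm Γ t (.lett t (.var 0)) (.dia A)
  | dia_beta1 {Γ t u u' A B C} : HasTy Γ t (.dia A) → HasTy (A :: Γ) u B →
      HasTy (B :: Γ) u' C →
      EqTm Γ (.lett (.lett t u) u')
        (.lett t (subst 0 u (rename (liftRen Nat.succ) u'))) (.dia C)
  | dia_beta2 {Γ t u A B} : HasTy Γ t A → HasTy (A :: Γ) u B →
      EqTm Γ (.lett (.ret t) u) (.ret (subst 0 t u)) (.dia B)

mutual
  /-- Neutral terms `Γ ⊢ne n : A` of RLC. -/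
  inductive Neu : Ctx → Tm → Ty → Prop
    | var {Γ n A} : Γ[n]? = some A → Neu Γ (.var n) A
    | fst {Γ t A B} : Neu Γ t (.prod A B) → Neu Γ (.fst t) A
    | snd {Γ t A B} : Neu Γ t (.prod A B) → Neu Γ (.snd t) B
    | app {Γ t u A B} : Neu Γ t (.arr A B) → Nf Γ u A → Neu Γ (.app t u) B

  /-- Normal forms `Γ ⊢nf n : A` of RLC. -/
  inductive Nf : Ctx → Tm → Ty → Prop
    | up {Γ t} : Neu Γ t .base → Nf Γ t .base
    | unit {Γ} : Nf Γ .unit .unit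
    | pair {Γ t u A B} : Nf Γ t A → Nf Γ u B → Nf Γ (.pair t u) (.prod A B)
    | lam {Γ t A B} : Nf (A :: Γ) t B → Nf Γ (.lam t) (.arr A B)
    | ret {Γ t A} : Nf Γ t A → Nf Γ (.ret t) (.dia A)
    | lett {Γ t u A B} : Neu Γ t (.dia A) → Nf (A :: Γ) u B →
        Nf Γ (.lett t u) (.dia B)
end

/-!
Normalization by hereditary substitution. Substituting a normal form `n : A` into a normal
form yields a normal form, computed by recursion on `A` and then on the term: the only
redexes created are `fst ⟨a, b⟩`, `(λx.b) u` and `let x = q in u` with `q` normal, at types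
strictly smaller than `A`, and they are contracted by further substitutions at those smaller
types (for `let`, `◇-β₂` or `◇-β₁` depending on whether `q` is a `return` or a `let`).
Each term constructor is then interpreted on normal forms by these operations, and variables
are η-expanded.
-/

def IsRenaming (ρ : ℕ → ℕ) (Γ Γ' : Ctx) : Prop :=
  ∀ i A, Γ[i]? = some A → Γ'[ρ i]? = some A

theorem IsRenaming.lift {ρ : ℕ → ℕ} {Γ Γ' : Ctx} (h : IsRenaming ρ Γ Γ') (A : Ty) :
    IsRenaming (liftRen ρ) (A :: Γ) (A :: Γ') := by
  rintro (_ | i) B hi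
  · simpa [liftRen] using hi
  · exact h i B hi

theorem isRenaming_succ (Γ : Ctx) (A : Ty) : IsRenaming Nat.succ Γ (A :: Γ) :=
  fun _ _ h => h

theorem isRenaming_add_length (Γ Δ : Ctx) : IsRenaming (· + Δ.length) Γ (Δ ++ Γ) := by
  intro i A hi
  rwa [List.getElem?_append_right (Nat.le_add_left _ _), Nat.add_sub_cancel]

mutual
theorem Neu.rename {Γ Γ' : Ctx} {ρ : ℕ → ℕ} {t : Tm} {A : Ty} (hρ : IsRenaming ρ Γ Γ') :
    Neu Γ t A → Neu Γ' (rename ρ t) A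
  | .var hv => .var (hρ _ _ hv)
  | .fst h => .fst (h.rename hρ)
  | .snd h => .snd (h.rename hρ)
  | .app h₁ h₂ => .app (h₁.rename hρ) (h₂.rename hρ)

theorem Nf.rename {Γ Γ' : Ctx} {ρ : ℕ → ℕ} {t : Tm} {A : Ty} (hρ : IsRenaming ρ Γ Γ') :
    Nf Γ t A → Nf Γ' (rename ρ t) A
  | .up h => .up (h.rename hρ)
  | .unit => .unit
  | .pair h₁ h₂ => .pair (h₁.rename hρ) (h₂.rename hρ)
  | .lam h => .lam (h.rename (hρ.lift _))
  | .ret h => .ret (h.rename hρ)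
  | .lett h₁ h₂ => .lett (h₁.rename hρ) (h₂.rename (hρ.lift _))
end

mutual
theorem Neu.hasTy {Γ : Ctx} {t : Tm} {A : Ty} : Neu Γ t A → HasTy Γ t A
  | .var hv => .var hv
  | .fst h => .fst h.hasTy
  | .snd h => .snd h.hasTy
  | .app h₁ h₂ => .app h₁.hasTy h₂.hasTy

theorem Nf.hasTy {Γ : Ctx} {t : Tm} {A : Ty} : Nf Γ t A → HasTy Γ t A
  | .up h => h.hasTy
  | .unit => .unit
  | .pair h₁ h₂ => .pair h₁.hasTy h₂.hasTy
  | .lam h => .lam h.hasTy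
  | .ret h => .ret h.hasTy
  | .lett h₁ h₂ => .lett h₁.hasTy h₂.hasTy
end

def HasNf (Γ : Ctx) (t : Tm) (A : Ty) : Prop :=
  ∃ n, Nf Γ n A ∧ EqTm Γ t n A

def HasNeu (Γ : Ctx) (t : Tm) (A : Ty) : Prop :=
  ∃ n, Neu Γ n A ∧ EqTm Γ t n A

def SubstNf (A : Ty) : Prop :=
  ∀ {Γ Δ : Ctx} {n t : Tm} {B : Ty}, Nf Γ n A → Nf (Δ ++ A :: Γ) t B →
    HasNf (Δ ++ Γ) (subst Δ.length n t) B

namespace HasNf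

variable {Γ : Ctx} {t u : Tm} {A B : Ty}

theorem of_nf (h : Nf Γ t A) : HasNf Γ t A :=
  ⟨t, h, .refl h.hasTy⟩

theorem of_eqTm (e : EqTm Γ t u A) : HasNf Γ u A → HasNf Γ t A
  | ⟨n, hn, en⟩ => ⟨n, hn, .trans e en⟩

theorem of_neu (h : Neu Γ t A) : HasNf Γ t A := by
  induction A generalizing Γ t with
  | base => exact of_nf (.up h)
  | unit => exact ⟨.unit, .unit, .unit_eta h.hasTy⟩
  | prod A B ihA ihB =>
    obtain ⟨a, ha, ea⟩ := ihA h.fst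
    obtain ⟨b, hb, eb⟩ := ihB h.snd
    exact ⟨_, .pair ha hb, .trans (.prod_eta h.hasTy) (.pair_congr ea eb)⟩
  | arr A B ihA ihB =>
    have hweak : Neu (A :: Γ) (rename Nat.succ t) (.arr A B) := h.rename (isRenaming_succ Γ A)
    obtain ⟨x, hx, ex⟩ := ihA (Neu.var (Γ := A :: Γ) (n := 0) rfl)
    obtain ⟨m, hm, em⟩ := ihB (hweak.app hx)
    exact ⟨.lam m, .lam hm, .trans (.arr_eta h.hasTy)
      (.lam_congr (.trans (.app_congr (.refl hweak.hasTy) ex) em))⟩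
  | dia A ihA =>
    obtain ⟨x, hx, ex⟩ := ihA (Neu.var (Γ := A :: Γ) (n := 0) rfl)
    exact ⟨.lett t x, .lett h hx, .trans (.dia_eta h.hasTy) (.lett_congr (.refl h.hasTy) ex)⟩

theorem of_hasNeu : HasNeu Γ t A → HasNf Γ t A
  | ⟨_, hn, en⟩ => of_eqTm en (of_neu hn)

theorem pair : HasNf Γ t A → HasNf Γ u B → HasNf Γ (.pair t u) (.prod A B)
  | ⟨a, ha, ea⟩, ⟨b, hb, eb⟩ => ⟨.pair a b, .pair ha hb, .pair_congr ea eb⟩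

theorem lam : HasNf (A :: Γ) t B → HasNf Γ (.lam t) (.arr A B)
  | ⟨b, hb, eb⟩ => ⟨.lam b, .lam hb, .lam_congr eb⟩

theorem ret : HasNf Γ t A → HasNf Γ (.ret t) (.dia A)
  | ⟨a, ha, ea⟩ => ⟨.ret a, .ret ha, .ret_congr ea⟩

theorem fst (h : HasNf Γ t (.prod A B)) : HasNf Γ (.fst t) A := by
  obtain ⟨_, hp, ep⟩ := h
  cases hp with
  | pair ha hb => exact ⟨_, ha, .trans (.fst_congr ep) (.prod_beta1 ha.hasTy hb.hasTy)⟩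

theorem snd (h : HasNf Γ t (.prod A B)) : HasNf Γ (.snd t) B := by
  obtain ⟨_, hp, ep⟩ := h
  cases hp with
  | pair ha hb => exact ⟨_, hb, .trans (.snd_congr ep) (.prod_beta2 ha.hasTy hb.hasTy)⟩

theorem lett_of_hasNeu {C : Ty} : HasNeu Γ t (.dia C) → HasNf (C :: Γ) u B →
    HasNf Γ (.lett t u) (.dia B)
  | ⟨q, hq, eq⟩, ⟨m, hm, em⟩ => ⟨.lett q m, .lett hq hm, .lett_congr eq em⟩

theorem app (hA : SubstNf A) (hf : HasNf Γ t (.arr A B)) (hu : HasNf Γ u A) :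
    HasNf Γ (.app t u) B := by
  obtain ⟨_, hl, el⟩ := hf
  obtain ⟨u', hu', eu⟩ := hu
  cases hl with
  | lam hb =>
    exact of_eqTm (.trans (.app_congr el eu) (.arr_beta hb.hasTy hu'.hasTy))
      (hA (Δ := []) hu' hb)

theorem lett (hA : SubstNf A) (hq : HasNf Γ t (.dia A)) (hu : HasNf (A :: Γ) u B) :
    HasNf Γ (.lett t u) (.dia B) := by
  obtain ⟨_, hnf, eq⟩ := hq
  obtain ⟨u', hu', eu⟩ := hu
  have e : EqTm Γ (.lett t u) _ (.dia B) := .lett_congr eq eu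
  cases hnf with
  | ret ha =>
    exact of_eqTm (.trans e (.dia_beta2 ha.hasTy hu'.hasTy)) (hA (Δ := []) ha hu').ret
  | @lett _ q₁ q₂ C _ hq₁ hq₂ =>
    have hu'' : Nf (A :: C :: Γ) (rename (liftRen Nat.succ) u') B :=
      hu'.rename ((isRenaming_succ Γ C).lift A)
    exact of_eqTm (.trans e (.dia_beta1 hq₁.hasTy hq₂.hasTy hu'.hasTy))
      (lett_of_hasNeu ⟨q₁, hq₁, .refl hq₁.hasTy⟩ (hA (Δ := []) hq₂ hu''))

end HasNf

theorem subst_var_cases {Γ Δ : Ctx} {A B : Ty} {j : ℕ} (hj : (Δ ++ A :: Γ)[j]? = some B)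
    (n : Tm) :
    (B = A ∧ subst Δ.length n (.var j) = rename (· + Δ.length) n) ∨
      ∃ j', (Δ ++ Γ)[j']? = some B ∧ subst Δ.length n (.var j) = .var j' := by
  rcases lt_trichotomy j Δ.length with hlt | rfl | hgt
  · refine .inr ⟨j, ?_, by simp [subst, hlt]⟩
    rwa [List.getElem?_append_left hlt] at hj ⊢
  · refine .inl ⟨?_, by simp [subst]⟩
    simpa using hj.symm
  · refine .inr ⟨j - 1, ?_, by simp [subst, hgt.ne', hgt.not_gt]⟩
    obtain ⟨k, rfl⟩ := Nat.exists_eq_add_of_lt hgt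
    rw [List.getElem?_append_right (by omega)] at hj ⊢
    simpa [show Δ.length + k + 1 - Δ.length = k + 1 by omega,
      show Δ.length + k + 1 - 1 - Δ.length = k by omega] using hj

mutual
/-- A neutral whose head is the substituted variable collapses to a normal form, whose type is
then a component of `A`. -/
theorem Neu.hasNeu_or_hasNf_subst {A : Ty} (ih : ∀ C, sizeOf C < sizeOf A → SubstNf C)
    {Γ Δ : Ctx} {n t : Tm} {B : Ty} (hn : Nf Γ n A) :
    Neu (Δ ++ A :: Γ) t B →
      HasNeu (Δ ++ Γ) (subst Δ.length n t) B ∨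
        sizeOf B ≤ sizeOf A ∧ HasNf (Δ ++ Γ) (subst Δ.length n t) B
  | .var hj => by
    rcases subst_var_cases hj n with ⟨rfl, hs⟩ | ⟨j', hj', hs⟩
    · exact .inr ⟨le_rfl, by rw [hs]; exact .of_nf (hn.rename (isRenaming_add_length Γ Δ))⟩
    · exact .inl ⟨.var j', .var hj', by rw [hs]; exact .refl (.var hj')⟩
  | .fst h => by
    rcases h.hasNeu_or_hasNf_subst ih hn with ⟨m, hm, em⟩ | ⟨hle, hp⟩
    · exact .inl ⟨.fst m, .fst hm, .fst_congr em⟩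
    · exact .inr ⟨by rw [Ty.prod.sizeOf_spec] at hle; omega, hp.fst⟩
  | .snd h => by
    rcases h.hasNeu_or_hasNf_subst ih hn with ⟨m, hm, em⟩ | ⟨hle, hp⟩
    · exact .inl ⟨.snd m, .snd hm, .snd_congr em⟩
    · exact .inr ⟨by rw [Ty.prod.sizeOf_spec] at hle; omega, hp.snd⟩
  | .app hf hu => by
    obtain ⟨u', hu', eu⟩ := Nf.hasNf_subst ih hn hu
    rcases hf.hasNeu_or_hasNf_subst ih hn with ⟨m, hm, em⟩ | ⟨hle, hl⟩
    · exact .inl ⟨.app m u', .app hm hu', .app_congr em eu⟩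
    · rw [Ty.arr.sizeOf_spec] at hle
      exact .inr ⟨by omega, hl.app (ih _ (by omega)) ⟨u', hu', eu⟩⟩

theorem Nf.hasNf_subst {A : Ty} (ih : ∀ C, sizeOf C < sizeOf A → SubstNf C)
    {Γ Δ : Ctx} {n t : Tm} {B : Ty} (hn : Nf Γ n A) :
    Nf (Δ ++ A :: Γ) t B → HasNf (Δ ++ Γ) (subst Δ.length n t) B
  | .up h => (h.hasNeu_or_hasNf_subst ih hn).elim .of_hasNeu And.right
  | .unit => .of_nf .unit
  | .pair h₁ h₂ => (Nf.hasNf_subst ih hn h₁).pair (Nf.hasNf_subst ih hn h₂)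
  | .lam h => HasNf.lam (Nf.hasNf_subst ih hn h (Δ := _ :: Δ))
  | .ret h => (Nf.hasNf_subst ih hn h).ret
  | .lett hq hu => by
    have hu' := Nf.hasNf_subst ih hn hu (Δ := _ :: Δ)
    rcases hq.hasNeu_or_hasNf_subst ih hn with hq' | ⟨hle, hq'⟩
    · exact .lett_of_hasNeu hq' hu'
    · exact hq'.lett (ih _ (by rw [Ty.dia.sizeOf_spec] at hle; omega)) hu'
end

theorem substNf (A : Ty) : SubstNf A :=
  fun hn ht => Nf.hasNf_subst (fun C _ => substNf C) hn ht
termination_by sizeOf A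

/-- STATEMENT 13: correctness of normalization for RLC: every well-typed term
`Γ ⊢ t : A` has a normal form `Γ ⊢nf n : A` with `Γ ⊢ t ≡ n : A`. -/
theorem normalization_correct_RLC {Γ : Ctx} {t : Tm} {A : Ty}
    (ht : HasTy Γ t A) : ∃ n : Tm, Nf Γ n A ∧ EqTm Γ t n A := by
  show HasNf Γ t A
  induction ht with
  | var hv => exact .of_neu (.var hv)
  | unit => exact .of_nf .unit
  | pair _ _ iht ihu => exact iht.pair ihu
  | fst _ ih => exact ih.fst
  | snd _ ih => exact ih.snd
  | lam _ ih => exact ih.lam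
  | app _ _ ihf ihu => exact ihf.app (substNf _) ihu
  | ret _ ih => exact ih.ret
  | lett _ _ ihq ihu => exact ihq.lett (substNf _) ihu
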